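/- Consider the ℚ-vector space of polynomials in the twelve variables a1, a2, b1, b2, …, f1, f2 that are homogeneous of degree 1 in each of the six pairs (a1,a2), …, (f1,f2), invariant under the simultaneous SL₂(ℚ)-substitution acting on all six pairs, invariant under the exchange J (a↔b, e↔f simultaneously), invariant under the exchange K (b↔c, f↔d simultaneously), and sent to their negative by the exchange L (a↔e, b↔f, c↔d simultaneously). This vector space is 2-dimensional, with basis S = (da)(fc)(eb) − (ce)(bd)(af) and (ae)(bf)(cd). -/

import Mathlib

open MvPolynomial

/-- The bracket `(uv) = u1·v2 − u2·v1` of letters `u, v ∈ {a,…,f}` (indexed by `Fin 6`,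
with `a = 0, …, f = 5`), as a polynomial in the twelve variables indexed by
`Fin 6 × Fin 2`. -/
noncomputable def brP (u v : Fin 6) : MvPolynomial (Fin 6 × Fin 2) ℚ :=
  X (u, 0) * X (v, 1) - X (u, 1) * X (v, 0)

/-- `S = (da)(fc)(eb) − (ce)(bd)(af)`. -/
noncomputable def SP : MvPolynomial (Fin 6 × Fin 2) ℚ :=
  brP 3 0 * brP 5 2 * brP 4 1 - brP 2 4 * brP 1 3 * brP 0 5

/-- `(ae)(bf)(cd)`. -/
noncomputable def BP : MvPolynomial (Fin 6 × Fin 2) ℚ :=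
  brP 0 4 * brP 1 5 * brP 2 3

/-- `P` is homogeneous of degree `1` in each of the six pairs of variables. -/
def Multilin (P : MvPolynomial (Fin 6 × Fin 2) ℚ) : Prop :=
  IsWeightedHomogeneous (fun p : Fin 6 × Fin 2 => (Pi.single p.1 1 : Fin 6 → ℕ)) P
    (fun _ => 1)

/-- `P` is invariant under the simultaneous `SL₂(ℚ)`-substitution
`(u1,u2) ↦ (u1,u2)·g` on all six pairs of variables. -/
def SL2Invariant (P : MvPolynomial (Fin 6 × Fin 2) ℚ) : Prop :=
  ∀ g : Matrix.SpecialLinearGroup (Fin 2) ℚ,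
    aeval (fun p : Fin 6 × Fin 2 =>
      ∑ j : Fin 2, C ((g : Matrix (Fin 2) (Fin 2) ℚ) j p.2) * X (p.1, j)) P = P

/-- Exchange of the letters indexed by a permutation `π` of `Fin 6`. -/
noncomputable def exchange (π : Equiv.Perm (Fin 6)) :
    MvPolynomial (Fin 6 × Fin 2) ℚ → MvPolynomial (Fin 6 × Fin 2) ℚ :=
  rename fun p => (π p.1, p.2)

/-!
A multilinear polynomial is a combination of the monomials `x^A`, `A ⊆ {a, …, f}`, where `x^A`
takes the second variable of the letters in `A` and the first variable of the others. Invariance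
under `diag(2, 1/2)` kills the coefficients `c_A` with `|A| ≠ 3`, invariance under the unipotent
`[[1, 1], [0, 1]]` gives `∑_{A ⊇ B} c_A = c_B`, and `J`, `K`, `L` permute the coefficients (`L`
with a sign). Under `⟨J, K, L⟩ ≅ S₃ × C₂` the twenty 3-subsets fall into the three orbits of
`def`, `aef` and `cef`, and the relation for `B = ef` reads `c_aef + c_bef + c_cef + c_def = 0`
with `c_bef = c_aef`. So a polynomial of the space vanishes once `c_def = c_aef = 0`, while
`S` and `(ae)(bf)(cd)` lie in the space with `(c_def, c_aef)` equal to `(-2, 1)` and `(1, 0)`.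
-/

namespace MvPolynomial

lemma monomial_eq_C_mul_monomial_one {σ R : Type*} [CommSemiring R] (s : σ →₀ ℕ) (r : R) :
    monomial s r = C r * monomial s 1 := by
  rw [C_mul_monomial, mul_one]

section Multilinear

open Finset

variable {ι R : Type*} [CommSemiring R]

noncomputable def linSubst (g : Matrix (Fin 2) (Fin 2) R) :
    MvPolynomial (ι × Fin 2) R →ₐ[R] MvPolynomial (ι × Fin 2) R :=
  aeval fun p => ∑ j, C (g j p.2) * X (p.1, j)

lemma linSubst_C (g : Matrix (Fin 2) (Fin 2) R) (r : R) :
    linSubst (ι := ι) g (C r) = C r :=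
  (linSubst g).commutes r

variable [DecidableEq ι]

def pairWeight (p : ι × Fin 2) : ι → ℕ := Pi.single p.1 1

def pairChoice (A : Finset ι) (i : ι) : Fin 2 := if i ∈ A then 1 else 0

lemma pairChoice_injective : Function.Injective (pairChoice : Finset ι → ι → Fin 2) := by
  intro A B h
  ext i
  have := congrFun h i
  by_cases hA : i ∈ A <;> by_cases hB : i ∈ B <;> simp_all [pairChoice]

variable [Fintype ι]

noncomputable def multilinExp (A : Finset ι) : ι × Fin 2 →₀ ℕ :=
  ∑ i, Finsupp.single (i, pairChoice A i) 1

lemma multilinExp_apply (A : Finset ι) (p : ι × Fin 2) :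
    multilinExp A p = if pairChoice A p.1 = p.2 then 1 else 0 := by
  rw [multilinExp, Finsupp.finsetSum_apply, sum_eq_single p.1]
  · by_cases h : pairChoice A p.1 = p.2 <;> simp [h, Prod.ext_iff]
  · intro i _ hi
    simp [Prod.ext_iff, hi]
  · simp

lemma multilinExp_injective : Function.Injective (multilinExp : Finset ι → ι × Fin 2 →₀ ℕ) := by
  intro A B h
  apply pairChoice_injective
  funext i
  simpa [multilinExp_apply, eq_comm] using DFunLike.congr_fun h (i, pairChoice A i)

lemma monomial_multilinExp (A : Finset ι) :
    monomial (multilinExp A) (1 : R) = ∏ i, X (i, pairChoice A i) := by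
  rw [multilinExp, monomial_sum_one]
  rfl

lemma weight_pairWeight_apply (d : ι × Fin 2 →₀ ℕ) (i : ι) :
    Finsupp.weight pairWeight d i = d (i, 0) + d (i, 1) := by
  rw [Finsupp.weight_apply, Finsupp.sum_fintype _ _ (by simp), Finset.sum_apply,
    Fintype.sum_prod_type, sum_eq_single i]
  · simp [pairWeight, Fin.sum_univ_two]
  · intro j _ hj
    simp [pairWeight, Ne.symm hj]
  · simp

lemma IsWeightedHomogeneous.eq_sum_multilinExp {P : MvPolynomial (ι × Fin 2) R}
    (hP : IsWeightedHomogeneous pairWeight P 1) :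
    P = ∑ A, monomial (multilinExp A) (coeff (multilinExp A) P) := by
  have hsupp : P.support ⊆ univ.image multilinExp := by
    intro d hd
    have hpair : ∀ i, d (i, 0) + d (i, 1) = 1 := fun i => by
      rw [← weight_pairWeight_apply, hP (mem_support_iff.mp hd), Pi.one_apply]
    refine mem_image.mpr ⟨({i | d (i, 1) = 1} : Finset ι), mem_univ _, ?_⟩
    ext ⟨i, j⟩
    have := hpair i
    fin_cases j <;> by_cases h : d (i, 1) = 1 <;> simp [multilinExp_apply, pairChoice, h] <;> omega
  conv_lhs => rw [as_sum P]
  rw [sum_subset hsupp fun d _ hd => by rw [notMem_support_iff.mp hd, monomial_zero],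
    sum_image fun A _ B _ h => multilinExp_injective h]

lemma coeff_multilinExp_eq_eval {P : MvPolynomial (ι × Fin 2) R}
    (hP : IsWeightedHomogeneous pairWeight P 1) (A : Finset ι) :
    coeff (multilinExp A) P = eval (fun p => if pairChoice A p.1 = p.2 then 1 else 0) P := by
  conv_rhs => rw [hP.eq_sum_multilinExp]
  rw [map_sum, sum_eq_single A]
  · simp [monomial_eq_C_mul_monomial_one _ (coeff _ P), monomial_multilinExp]
  · intro B _ hB
    obtain ⟨i, hi⟩ := Function.ne_iff.mp (pairChoice_injective.ne (Ne.symm hB))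
    rw [monomial_eq_C_mul_monomial_one, monomial_multilinExp, map_mul, eval_prod,
      prod_eq_zero (mem_univ i) (by simp [hi]), mul_zero]
  · simp

lemma coeff_multilinExp_map_rename (π : Equiv.Perm ι) (P : MvPolynomial (ι × Fin 2) R)
    (A : Finset ι) :
    coeff (multilinExp (A.map π.toEmbedding)) (rename (fun p : ι × Fin 2 => (π p.1, p.2)) P) =
      coeff (multilinExp A) P := by
  have hexp : multilinExp (A.map π.toEmbedding) =
      Finsupp.mapDomain (Equiv.prodCongr π (Equiv.refl (Fin 2))) (multilinExp A) := by
    ext p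
    rw [Finsupp.mapDomain_equiv_apply, multilinExp_apply, multilinExp_apply]
    simp [pairChoice, mem_map_equiv]
  rw [hexp]
  exact coeff_rename_mapDomain _ (Equiv.prodCongr π (Equiv.refl _)).injective P _

lemma linSubst_monomial_multilinExp (g : Matrix (Fin 2) (Fin 2) R) (A : Finset ι) :
    linSubst g (monomial (multilinExp A) 1) =
      ∑ B, monomial (multilinExp B) (∏ i, g (pairChoice B i) (pairChoice A i)) := by
  set f₁ : ι → MvPolynomial (ι × Fin 2) R := fun i => C (g 1 (pairChoice A i)) * X (i, 1)
  set f₀ : ι → MvPolynomial (ι × Fin 2) R := fun i => C (g 0 (pairChoice A i)) * X (i, 0)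
  have hpiece : ∀ B : Finset ι, ∀ i,
      B.piecewise f₁ f₀ i = C (g (pairChoice B i) (pairChoice A i)) * X (i, pairChoice B i) := by
    intro B i
    by_cases hi : i ∈ B <;> simp [f₁, f₀, pairChoice, hi]
  have hsubst : ∀ i, linSubst g (X (i, pairChoice A i)) = f₁ i + f₀ i := fun i => by
    simp [linSubst, f₁, f₀, Fin.sum_univ_two, add_comm]
  rw [monomial_multilinExp, map_prod, prod_congr rfl fun i _ => hsubst i, prod_add,
    powerset_univ]
  refine sum_congr rfl fun B _ => ?_
  have h := prod_piecewise univ B f₁ f₀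
  rw [univ_inter] at h
  rw [← h, monomial_eq_C_mul_monomial_one, monomial_multilinExp, map_prod, ← prod_mul_distrib]
  exact prod_congr rfl fun i _ => hpiece B i

lemma coeff_multilinExp_linSubst {P : MvPolynomial (ι × Fin 2) R}
    (hP : IsWeightedHomogeneous pairWeight P 1) (g : Matrix (Fin 2) (Fin 2) R) (B : Finset ι) :
    coeff (multilinExp B) (linSubst g P) =
      ∑ A, (∏ i, g (pairChoice B i) (pairChoice A i)) * coeff (multilinExp A) P := by
  conv_lhs => rw [hP.eq_sum_multilinExp]
  rw [map_sum, coeff_sum]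
  refine sum_congr rfl fun A _ => ?_
  rw [monomial_eq_C_mul_monomial_one, map_mul, linSubst_C, coeff_C_mul,
    linSubst_monomial_multilinExp, coeff_sum, mul_comm]
  simp [coeff_monomial, multilinExp_injective.eq_iff]

lemma coeff_multilinExp_eq_zero_of_linSubst_diag {K : Type*} [Field K] [CharZero K]
    {P : MvPolynomial (ι × Fin 2) K} (hP : IsWeightedHomogeneous pairWeight P 1)
    (hT : linSubst !![(2 : K), 0; 0, 2⁻¹] P = P) {A : Finset ι}
    (hA : 2 * A.card ≠ Fintype.card ι) :
    coeff (multilinExp A) P = 0 := by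
  have h := congrArg (coeff (multilinExp A)) hT
  rw [coeff_multilinExp_linSubst hP, sum_eq_single A] at h
  · have hdiag : ∀ i, !![(2 : K), 0; 0, 2⁻¹] (pairChoice A i) (pairChoice A i) =
        if i ∈ A then 2⁻¹ else 2 :=
      fun i => by by_cases hi : i ∈ A <;> simp [pairChoice, hi]
    have hprod : ∏ i, !![(2 : K), 0; 0, 2⁻¹] (pairChoice A i) (pairChoice A i) =
        2⁻¹ ^ A.card * 2 ^ Aᶜ.card := by
      rw [prod_congr rfl fun i _ => hdiag i, prod_ite, prod_const, prod_const,
        filter_mem_eq_inter, univ_inter, filter_not, filter_mem_eq_inter, univ_inter,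
        compl_eq_univ_sdiff]
    have hne : (2⁻¹ : K) ^ A.card * 2 ^ Aᶜ.card ≠ 1 := by
      intro h1
      have h2 : ((2 ^ Aᶜ.card : ℕ) : K) = ((2 ^ A.card : ℕ) : K) := by
        push_cast
        calc (2 : K) ^ Aᶜ.card = 2 ^ A.card * (2⁻¹ ^ A.card * 2 ^ Aᶜ.card) := by
              rw [← mul_assoc, ← mul_pow, mul_inv_cancel₀ two_ne_zero, one_pow, one_mul]
          _ = 2 ^ A.card := by rw [h1, mul_one]
      have h3 := Nat.pow_right_injective le_rfl (Nat.cast_injective h2)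
      rw [card_compl] at h3
      omega
    rw [hprod] at h
    by_contra hc
    exact hne (mul_right_cancel₀ hc (h.trans (one_mul _).symm))
  · intro B _ hB
    obtain ⟨i, hi⟩ := Function.ne_iff.mp (pairChoice_injective.ne (Ne.symm hB))
    rw [prod_eq_zero (mem_univ i), zero_mul]
    revert hi
    generalize pairChoice A i = x
    generalize pairChoice B i = y
    fin_cases x <;> fin_cases y <;> simp
  · simp

lemma sum_coeff_multilinExp_superset {P : MvPolynomial (ι × Fin 2) R}
    (hP : IsWeightedHomogeneous pairWeight P 1) (hU : linSubst !![(1 : R), 1; 0, 1] P = P)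
    (B : Finset ι) :
    ∑ A with B ⊆ A, coeff (multilinExp A) P = coeff (multilinExp B) P := by
  have h := congrArg (coeff (multilinExp B)) hU
  rw [coeff_multilinExp_linSubst hP] at h
  rw [← h, sum_filter]
  refine sum_congr rfl fun A _ => ?_
  have hprod : ∏ i, !![(1 : R), 1; 0, 1] (pairChoice B i) (pairChoice A i) =
      if B ⊆ A then 1 else 0 := by
    split_ifs with hBA
    · refine prod_eq_one fun i _ => ?_
      by_cases hB : i ∈ B
      · simp [pairChoice, hB, hBA hB]
      · by_cases hA : i ∈ A <;> simp [pairChoice, hA, hB]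
    · obtain ⟨i, hB, hA⟩ := not_subset.mp hBA
      exact prod_eq_zero (mem_univ i) (by simp [pairChoice, hA, hB])
  rw [hprod, ite_mul, one_mul, zero_mul]

end Multilinear

end MvPolynomial

namespace Finset

variable {α : Type*} [DecidableEq α]

def adjoinImages (fs : List (α → α)) (S : Finset α) : Finset α :=
  fs.foldr (fun f T => T ∪ S.image f) S

lemma forall_mem_adjoinImages_iterate {fs : List (α → α)} {p : α → Prop}
    (hfs : ∀ f ∈ fs, ∀ a, p a → p (f a)) {S : Finset α} (hS : ∀ a ∈ S, p a) (n : ℕ) :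
    ∀ a ∈ (adjoinImages fs)^[n] S, p a := by
  induction n generalizing S with
  | zero => exact hS
  | succ n ih =>
    rw [Function.iterate_succ_apply]
    refine ih fun a ha => ?_
    clear ih
    induction fs with
    | nil => exact hS a ha
    | cons f fs ihfs =>
      simp only [adjoinImages, List.foldr_cons, mem_union, mem_image] at ha
      rcases ha with ha | ⟨b, hb, rfl⟩
      · exact ihfs (fun g hg => hfs g (List.mem_cons_of_mem f hg)) ha
      · exact hfs f List.mem_cons_self b (hS b hb)

end Finset

namespace Pascal

open Finset

def J : Equiv.Perm (Fin 6) := Equiv.swap 0 1 * Equiv.swap 4 5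

def K : Equiv.Perm (Fin 6) := Equiv.swap 1 2 * Equiv.swap 5 3

def L : Equiv.Perm (Fin 6) := Equiv.swap 0 4 * Equiv.swap 1 5 * Equiv.swap 2 3

lemma mem_adjoinImages_of_card_eq_three {A : Finset (Fin 6)} (hA : A.card = 3) :
    A ∈ (adjoinImages [(·.map J.toEmbedding), (·.map K.toEmbedding), (·.map L.toEmbedding)])^[4]
      {{3, 4, 5}, {0, 4, 5}, {2, 4, 5}} := by
  revert A
  decide

lemma eq_zero_of_coeff_relations (c : Finset (Fin 6) → ℚ)
    (hcard : ∀ A : Finset (Fin 6), A.card ≠ 3 → c A = 0)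
    (hsup : ∀ B, ∑ A with B ⊆ A, c A = c B)
    (hJ : ∀ A, c (A.map J.toEmbedding) = c A) (hK : ∀ A, c (A.map K.toEmbedding) = c A)
    (hL : ∀ A, c (A.map L.toEmbedding) = -c A)
    (h345 : c {3, 4, 5} = 0) (h045 : c {0, 4, 5} = 0) (A : Finset (Fin 6)) : c A = 0 := by
  have h145 : c {1, 4, 5} = 0 := by
    rw [show ({1, 4, 5} : Finset (Fin 6)) = ({0, 4, 5} : Finset (Fin 6)).map J.toEmbedding by
      decide, hJ, h045]
  have h245 : c {2, 4, 5} = 0 := by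
    have h := hsup {4, 5}
    rw [← sum_filter_of_ne (p := fun A => A.card = 3)
        fun A _ hA => by_contra fun h => hA (hcard A h),
      filter_filter, show ({A | {4, 5} ⊆ A ∧ A.card = 3} : Finset (Finset (Fin 6))) =
        {{0, 4, 5}, {1, 4, 5}, {2, 4, 5}, {3, 4, 5}} by decide,
      hcard {4, 5} (by decide), sum_insert (by decide), sum_insert (by decide),
      sum_insert (by decide), sum_singleton, h045, h145, h345] at h
    linarith
  by_cases hA : A.card = 3
  · refine forall_mem_adjoinImages_iterate (p := fun A => c A = 0) ?_ ?_ 4 A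
      (mem_adjoinImages_of_card_eq_three hA)
    · simp only [List.mem_cons, List.not_mem_nil, or_false]
      rintro f (rfl | rfl | rfl) B hB <;> simp [hJ, hK, hL, hB]
    · simp [h345, h045, h245]
  · exact hcard A hA

lemma sl2Invariant_iff {P : MvPolynomial (Fin 6 × Fin 2) ℚ} :
    SL2Invariant P ↔
      ∀ g : Matrix.SpecialLinearGroup (Fin 2) ℚ, linSubst (g : Matrix (Fin 2) (Fin 2) ℚ) P = P :=
  Iff.rfl

def invariants : Submodule ℚ (MvPolynomial (Fin 6 × Fin 2) ℚ) where
  carrier := {P | Multilin P ∧ SL2Invariant P ∧ exchange J P = P ∧ exchange K P = P ∧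
    exchange L P = -P}
  zero_mem' := ⟨isWeightedHomogeneous_zero _ _ _, fun _ => map_zero _, map_zero _, map_zero _,
    by rw [neg_zero]; exact map_zero _⟩
  add_mem' := by
    rintro P Q ⟨hPM, hPS, hPJ, hPK, hPL⟩ ⟨hQM, hQS, hQJ, hQK, hQL⟩
    refine ⟨hPM.add hQM, fun g => ?_, ?_, ?_, ?_⟩
    · rw [map_add, hPS g, hQS g]
    · rw [exchange, map_add]; exact congrArg₂ (· + ·) hPJ hQJ
    · rw [exchange, map_add]; exact congrArg₂ (· + ·) hPK hQK
    · rw [exchange, map_add, neg_add]; exact congrArg₂ (· + ·) hPL hQL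
  smul_mem' := by
    rintro r P ⟨hPM, hPS, hPJ, hPK, hPL⟩
    refine ⟨by rw [smul_eq_C_mul]; exact hPM.C_mul r, fun g => ?_, ?_, ?_, ?_⟩
    · rw [map_smul, hPS g]
    · rw [exchange, map_smul]; exact congrArg (r • ·) hPJ
    · rw [exchange, map_smul]; exact congrArg (r • ·) hPK
    · rw [exchange, map_smul]; exact (congrArg (r • ·) hPL).trans (smul_neg r P)

lemma linSubst_brP {g : Matrix (Fin 2) (Fin 2) ℚ} (hg : g.det = 1) (u v : Fin 6) :
    linSubst g (brP u v) = brP u v := by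
  rw [Matrix.det_fin_two] at hg
  have hC : (C (g 0 0) * C (g 1 1) - C (g 0 1) * C (g 1 0) : MvPolynomial (Fin 6 × Fin 2) ℚ) =
      1 := by
    rw [← map_mul, ← map_mul, ← map_sub, hg, map_one]
  simp only [brP, map_sub, map_mul, linSubst, aeval_X, Fin.sum_univ_two]
  linear_combination (X (u, 0) * X (v, 1) - X (u, 1) * X (v, 0)) * hC

lemma rename_brP (π : Equiv.Perm (Fin 6)) (u v : Fin 6) :
    rename (fun p : Fin 6 × Fin 2 => (π p.1, p.2)) (brP u v) = brP (π u) (π v) := by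
  simp [brP]

lemma isWeightedHomogeneous_brP (u v : Fin 6) :
    IsWeightedHomogeneous pairWeight (brP u v) (Pi.single u 1 + Pi.single v 1) :=
  ((isWeightedHomogeneous_X ℚ _ _).mul (isWeightedHomogeneous_X ℚ _ _)).sub
    ((isWeightedHomogeneous_X ℚ _ _).mul (isWeightedHomogeneous_X ℚ _ _))

lemma multilin_brP_mul_brP_mul_brP {u₁ v₁ u₂ v₂ u₃ v₃ : Fin 6}
    (h : Pi.single u₁ 1 + Pi.single v₁ 1 + (Pi.single u₂ 1 + Pi.single v₂ 1) +
      (Pi.single u₃ 1 + Pi.single v₃ 1) = (1 : Fin 6 → ℕ)) :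
    Multilin (brP u₁ v₁ * brP u₂ v₂ * brP u₃ v₃) := by
  rw [Multilin, show (fun _ => 1 : Fin 6 → ℕ) = 1 from rfl, ← h]
  exact ((isWeightedHomogeneous_brP u₁ v₁).mul (isWeightedHomogeneous_brP u₂ v₂)).mul
    (isWeightedHomogeneous_brP u₃ v₃)

lemma SP_mem : SP ∈ invariants := by
  refine ⟨IsWeightedHomogeneous.sub (multilin_brP_mul_brP_mul_brP (by decide))
    (multilin_brP_mul_brP_mul_brP (by decide)), sl2Invariant_iff.mpr fun g => ?_, ?_, ?_, ?_⟩
  · simp only [SP, map_sub, map_mul, linSubst_brP g.2]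
  all_goals
    simp only [exchange, SP, map_sub, map_mul, rename_brP]
    simp only [J, K, L, Equiv.Perm.coe_mul, Function.comp_apply, Equiv.swap_apply_def,
      Fin.reduceEq, reduceIte]
    simp only [brP]
    ring

lemma BP_mem : BP ∈ invariants := by
  refine ⟨multilin_brP_mul_brP_mul_brP (by decide), sl2Invariant_iff.mpr fun g => ?_, ?_, ?_, ?_⟩
  · simp only [BP, map_mul, linSubst_brP g.2]
  all_goals
    simp only [exchange, BP, map_mul, rename_brP]
    simp only [J, K, L, Equiv.Perm.coe_mul, Function.comp_apply, Equiv.swap_apply_def,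
      Fin.reduceEq, reduceIte]
    simp only [brP]
    ring

lemma coeff_SP_345 : coeff (multilinExp {3, 4, 5}) SP = -2 := by
  rw [coeff_multilinExp_eq_eval SP_mem.1]
  norm_num +decide [SP, brP, pairChoice]

lemma coeff_SP_045 : coeff (multilinExp {0, 4, 5}) SP = 1 := by
  rw [coeff_multilinExp_eq_eval SP_mem.1]
  norm_num +decide [SP, brP, pairChoice]

lemma coeff_BP_345 : coeff (multilinExp {3, 4, 5}) BP = 1 := by
  rw [coeff_multilinExp_eq_eval BP_mem.1]
  norm_num +decide [BP, brP, pairChoice]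

lemma coeff_BP_045 : coeff (multilinExp {0, 4, 5}) BP = 0 := by
  rw [coeff_multilinExp_eq_eval BP_mem.1]
  norm_num +decide [BP, brP, pairChoice]

lemma eq_zero_of_mem_invariants {P : MvPolynomial (Fin 6 × Fin 2) ℚ} (hP : P ∈ invariants)
    (h345 : coeff (multilinExp {3, 4, 5}) P = 0) (h045 : coeff (multilinExp {0, 4, 5}) P = 0) :
    P = 0 := by
  obtain ⟨hM, hSL, hJ, hK, hL⟩ := hP
  rw [sl2Invariant_iff] at hSL
  have hfix : ∀ {π : Equiv.Perm (Fin 6)}, exchange π P = P →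
      ∀ A, coeff (multilinExp (A.map π.toEmbedding)) P = coeff (multilinExp A) P := by
    intro π hπ A
    rw [← coeff_multilinExp_map_rename π P A]
    exact congrArg _ hπ.symm
  have hneg : ∀ A, coeff (multilinExp (A.map L.toEmbedding)) P = -coeff (multilinExp A) P := by
    intro A
    have h := coeff_multilinExp_map_rename L P A
    rw [show rename (fun p : Fin 6 × Fin 2 => (L p.1, p.2)) P = -P from hL, coeff_neg] at h
    linarith
  have hc := eq_zero_of_coeff_relations (fun A => coeff (multilinExp A) P)
    (fun A hA => coeff_multilinExp_eq_zero_of_linSubst_diag hM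
      (hSL ⟨!![2, 0; 0, 2⁻¹], by norm_num [Matrix.det_fin_two]⟩)
      (by rw [Fintype.card_fin]; omega))
    (sum_coeff_multilinExp_superset hM (hSL ⟨!![1, 1; 0, 1], by norm_num [Matrix.det_fin_two]⟩))
    (hfix hJ) (hfix hK) hneg h345 h045
  rw [hM.eq_sum_multilinExp]
  simp [hc]

lemma mem_invariants_iff {P : MvPolynomial (Fin 6 × Fin 2) ℚ} :
    P ∈ invariants ↔ ∃ α β : ℚ, P = α • SP + β • BP := by
  constructor
  · intro hP
    set x := coeff (multilinExp {3, 4, 5}) P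
    set y := coeff (multilinExp {0, 4, 5}) P
    have hmem : P - (y • SP + (x + 2 * y) • BP) ∈ invariants :=
      sub_mem hP (add_mem (invariants.smul_mem _ SP_mem) (invariants.smul_mem _ BP_mem))
    refine ⟨y, x + 2 * y, sub_eq_zero.mp (eq_zero_of_mem_invariants hmem ?_ ?_)⟩ <;>
    · simp only [coeff_sub, coeff_add, coeff_smul, smul_eq_mul, coeff_SP_345, coeff_SP_045,
        coeff_BP_345, coeff_BP_045]
      ring
  · rintro ⟨α, β, rfl⟩
    exact add_mem (invariants.smul_mem α SP_mem) (invariants.smul_mem β BP_mem)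

lemma linearIndependent_SP_BP : LinearIndependent ℚ ![SP, BP] := by
  refine LinearIndependent.pair_iff.mpr fun s t hst => ?_
  have h345 := congrArg (coeff (multilinExp {3, 4, 5})) hst
  have h045 := congrArg (coeff (multilinExp {0, 4, 5})) hst
  simp only [coeff_add, coeff_smul, smul_eq_mul, coeff_zero, coeff_SP_345, coeff_SP_045,
    coeff_BP_345, coeff_BP_045] at h345 h045
  constructor <;> linarith

end Pascal

/-- The ℚ-vector space of polynomials in the twelve variables `a1, a2, …, f1, f2` that
are multilinear (homogeneous of degree 1 in each of the six pairs), invariant under the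
simultaneous `SL₂(ℚ)`-action, invariant under `J` (`a↔b`, `e↔f`) and `K` (`b↔c`, `f↔d`),
and sent to their negative by `L` (`a↔e`, `b↔f`, `c↔d`), is 2-dimensional with basis
`S = (da)(fc)(eb) − (ce)(bd)(af)` and `(ae)(bf)(cd)`. -/
theorem pascal_stmt_17 :
    (∀ P : MvPolynomial (Fin 6 × Fin 2) ℚ,
      (Multilin P ∧ SL2Invariant P ∧
        exchange (Equiv.swap 0 1 * Equiv.swap 4 5) P = P ∧
        exchange (Equiv.swap 1 2 * Equiv.swap 5 3) P = P ∧
        exchange (Equiv.swap 0 4 * Equiv.swap 1 5 * Equiv.swap 2 3) P = -P) ↔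
      ∃ α β : ℚ, P = α • SP + β • BP) ∧
    LinearIndependent ℚ ![SP, BP] :=
  ⟨fun _ => Pascal.mem_invariants_iff, Pascal.linearIndependent_SP_BP⟩
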